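/- arXiv:0911.5450 — 2 statements merged into one kernel-verified Lean document; each statement's English description precedes it below -/
import Mathlib

section
/- Let T > 0, let φ : ℝ → ℝ be twice continuously differentiable, ψ : ℝ → ℝ be continuously differentiable, and F : ℝ → ℝ be continuous. If u is a classical solution on [0,T) of ∂²u/∂t² − ∂²u/∂x² = F(u(x,t)) with u(x,0) = φ(x) and ∂u/∂t(x,0) = ψ(x) (that is, u is C² on ℝ × (0,T) and C¹ on ℝ × [0,T)), then u is a mild solution on [0,T): for all (x,t) ∈ ℝ × [0,T), u(x,t) = v(x,t) + (1/2)∫_{Δ(x,t)} F(u(y,s)) dy ds, where v(x,t) = (1/2)∫_{x−t}^{x+t} ψ(y) dy + (1/2)(φ(x+t) + φ(x−t)) and Δ(x,t) = {(y,s) : 0 ≤ s ≤ t, |y−x| ≤ t−s}. -/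
/-!
In the characteristic coordinates `ξ = y + s`, `η = y - s` the backward light cone of `(x, t)`
becomes the triangle `x - t ≤ η ≤ ξ ≤ x + t` (with Jacobian `1/2`), and `□u = F(u)` becomes
`-4 ∂_η ∂_ξ w = F(u)` for `w(ξ, η) = u((ξ + η)/2, (ξ - η)/2)`. Integrating in `η` from the edge
`η = x - t` up to the initial line `η = ξ`, where `2 ∂_ξ w = φ' + ψ`, and then in `ξ` along that
edge, which ends at the vertex `(x, t)`, gives d'Alembert's formula with the Duhamel term.
-/

open MeasureTheory Set Filter Topology

/-- The backward light cone (a triangle) of the space-time point `(x,t)`. -/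
def lightCone (x t : ℝ) : Set (ℝ × ℝ) :=
  {q : ℝ × ℝ | 0 ≤ q.2 ∧ q.2 ≤ t ∧ |q.1 - x| ≤ t - q.2}

section SecondDerivative

variable {E F : Type*} [NormedAddCommGroup E] [NormedSpace ℝ E]
  [NormedAddCommGroup F] [NormedSpace ℝ F] {f : E → F} {p : E}

theorem ContDiffAt.fderiv_fderiv_sub_add (hf : ContDiffAt ℝ 2 f p) (v w : E) :
    fderiv ℝ (fderiv ℝ f) p (v - w) (v + w) =
      fderiv ℝ (fderiv ℝ f) p v v - fderiv ℝ (fderiv ℝ f) p w w := by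
  have hsymm := hf.isSymmSndFDerivAt (by simp) v w
  simp only [map_sub, map_add, sub_apply, hsymm]
  abel

theorem ContDiffAt.hasFDerivAt_fderiv (hf : ContDiffAt ℝ 2 f p) :
    HasFDerivAt (fderiv ℝ f) (fderiv ℝ (fderiv ℝ f) p) p :=
  ((hf.fderiv_right (m := 1) le_rfl).differentiableAt one_ne_zero).hasFDerivAt

theorem ContDiffAt.hasFDerivAt_fderivWithin {s : Set E} (hf : ContDiffAt ℝ 2 f p)
    (hs : s ∈ 𝓝 p) : HasFDerivAt (fderivWithin ℝ f s) (fderiv ℝ (fderiv ℝ f) p) p :=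
  hf.hasFDerivAt_fderiv.congr_of_eventuallyEq <| by
    filter_upwards [eventually_mem_nhds_iff.2 hs] with q hq using fderivWithin_of_mem_nhds hq

theorem ContDiffAt.deriv_deriv_line {a v : E} {t : ℝ} (hf : ContDiffAt ℝ 2 f (a + t • v)) :
    deriv (deriv fun s : ℝ => f (a + s • v)) t = fderiv ℝ (fderiv ℝ f) (a + t • v) v v := by
  have hline (s : ℝ) : HasDerivAt (fun s : ℝ => a + s • v) v s := by
    simpa using ((hasDerivAt_id s).smul_const v).const_add a
  have hderiv : deriv (fun s : ℝ => f (a + s • v)) =ᶠ[𝓝 t] fun s => fderiv ℝ f (a + s • v) v := by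
    filter_upwards [(hline t).continuousAt.eventually (hf.eventually (by simp))] with s hs
    exact ((hs.differentiableAt two_ne_zero).hasFDerivAt.comp_hasDerivAt s (hline s)).deriv
  rw [hderiv.deriv_eq]
  exact ((ContinuousLinearMap.apply ℝ F v).hasFDerivAt.comp_hasDerivAt t
    (hf.hasFDerivAt_fderiv.comp_hasDerivAt t (hline t))).deriv

theorem ContDiffOn.continuousOn_fderivWithin_apply_comp {s : Set E} (hf : ContDiffOn ℝ 1 f s)
    (hs : UniqueDiffOn ℝ s) {γ : ℝ → E} {I : Set ℝ} (hγ : ContinuousOn γ I) (hγs : MapsTo γ I s)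
    (v : E) : ContinuousOn (fun r => fderivWithin ℝ f s (γ r) v) I :=
  (ContinuousLinearMap.apply ℝ F v).continuous.comp_continuousOn
    ((hf.continuousOn_fderivWithin hs le_rfl).comp hγ hγs)

end SecondDerivative

section Plane

variable {F : Type*} [NormedAddCommGroup F] [NormedSpace ℝ F] {f : ℝ × ℝ → F} {x t : ℝ}

theorem ContDiffAt.deriv_deriv_fst (hf : ContDiffAt ℝ 2 f (x, t)) :
    deriv (deriv fun y => f (y, t)) x = fderiv ℝ (fderiv ℝ f) (x, t) (1, 0) (1, 0) := by
  simpa using ContDiffAt.deriv_deriv_line (a := ((0 : ℝ), t)) (v := ((1 : ℝ), (0 : ℝ)))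
    (t := x) (by simpa using hf)

theorem ContDiffAt.deriv_deriv_snd (hf : ContDiffAt ℝ 2 f (x, t)) :
    deriv (deriv fun s => f (x, s)) t = fderiv ℝ (fderiv ℝ f) (x, t) (0, 1) (0, 1) := by
  simpa using ContDiffAt.deriv_deriv_line (a := (x, (0 : ℝ))) (v := ((0 : ℝ), (1 : ℝ)))
    (t := t) (by simpa using hf)

end Plane

section CharacteristicCoordinates

noncomputable def charCoords : ℝ × ℝ →L[ℝ] ℝ × ℝ :=
  (2⁻¹ : ℝ) • ((ContinuousLinearMap.fst ℝ ℝ ℝ + ContinuousLinearMap.snd ℝ ℝ ℝ).prod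
    (ContinuousLinearMap.fst ℝ ℝ ℝ - ContinuousLinearMap.snd ℝ ℝ ℝ))

@[simp]
theorem charCoords_apply (p : ℝ × ℝ) : charCoords p = ((p.1 + p.2) / 2, (p.1 - p.2) / 2) := by
  ext <;> simp [charCoords] <;> ring

theorem charCoords_one_zero : charCoords (1, 0) = (2⁻¹ : ℝ) • (((1 : ℝ), (0 : ℝ)) + (0, 1)) := by
  simp only [charCoords_apply, Prod.smul_mk, Prod.mk_add_mk, smul_eq_mul]
  norm_num

theorem charCoords_zero_one : charCoords (0, 1) = (2⁻¹ : ℝ) • (((1 : ℝ), (0 : ℝ)) - (0, 1)) := by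
  simp only [charCoords_apply, Prod.smul_mk, Prod.mk_sub_mk, smul_eq_mul]
  norm_num

theorem charCoords_mem_univ_prod {s : Set ℝ} {ξ η : ℝ} :
    charCoords (ξ, η) ∈ univ ×ˢ s ↔ (ξ - η) / 2 ∈ s := by
  simp

theorem charCoords_injective : Function.Injective charCoords := by
  intro p q h
  simp only [charCoords_apply, Prod.mk.injEq] at h
  ext <;> linarith [h.1, h.2]

theorem charCoords_det : charCoords.det = -2⁻¹ := by
  rw [ContinuousLinearMap.det, ← LinearMap.det_toMatrix (Module.Basis.finTwoProd ℝ),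
    Matrix.det_fin_two]
  norm_num [LinearMap.toMatrix_apply]

def triangle (a b : ℝ) : Set (ℝ × ℝ) := {p | a ≤ p.2 ∧ p.2 ≤ p.1 ∧ p.1 ≤ b}

theorem isCompact_triangle (a b : ℝ) : IsCompact (triangle a b) := by
  refine (isCompact_Icc.prod isCompact_Icc : IsCompact (Icc a b ×ˢ Icc a b)).of_isClosed_subset
    ?_ ?_
  · exact (isClosed_le continuous_const continuous_snd).inter
      ((isClosed_le continuous_snd continuous_fst).inter
        (isClosed_le continuous_fst continuous_const))
  · rintro p ⟨h₁, h₂, h₃⟩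
    exact ⟨⟨h₁.trans h₂, h₃⟩, h₁, h₂.trans h₃⟩

theorem image_charCoords_triangle (x t : ℝ) :
    charCoords '' triangle (x - t) (x + t) = lightCone x t := by
  ext ⟨y, s⟩
  simp only [mem_image, triangle, lightCone, mem_ofPred_eq, charCoords_apply, Prod.exists,
    Prod.mk.injEq, abs_le]
  constructor
  · rintro ⟨ξ, η, ⟨h₁, h₂, h₃⟩, rfl, rfl⟩
    refine ⟨?_, ?_, ?_, ?_⟩ <;> linarith
  · rintro ⟨h₁, h₂, h₃, h₄⟩
    exact ⟨y + s, y - s, ⟨by linarith, by linarith, by linarith⟩, by ring, by ring⟩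

variable {E : Type*} [NormedAddCommGroup E] [NormedSpace ℝ E]

theorem setIntegral_image_charCoords {s : Set (ℝ × ℝ)} (hs : MeasurableSet s) (g : ℝ × ℝ → E) :
    ∫ q in charCoords '' s, g q = (2⁻¹ : ℝ) • ∫ p in s, g (charCoords p) := by
  rw [integral_image_eq_integral_abs_det_fderiv_smul volume hs
    (fun p _ => charCoords.hasFDerivAt.hasFDerivWithinAt) charCoords_injective.injOn,
    charCoords_det, abs_neg, abs_of_pos (by norm_num), integral_smul]

theorem setIntegral_triangle [CompleteSpace E] {g : ℝ × ℝ → E} {a b : ℝ} (hab : a ≤ b)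
    (hg : IntegrableOn g (triangle a b)) :
    ∫ p in triangle a b, g p = ∫ ξ in a..b, ∫ η in a..ξ, g (ξ, η) := by
  have hmeas : MeasurableSet (triangle a b) := (isCompact_triangle a b).isClosed.measurableSet
  have hslice (ξ : ℝ) : ∫ η, (triangle a b).indicator g (ξ, η) =
      (Icc a b).indicator (fun ξ => ∫ η in a..ξ, g (ξ, η)) ξ := by
    by_cases hξ : ξ ∈ Icc a b
    · rw [indicator_of_mem hξ, intervalIntegral.integral_of_le hξ.1,
        ← integral_Icc_eq_integral_Ioc, ← integral_indicator measurableSet_Icc]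
      congr 1 with η
      simp [indicator_apply, triangle, hξ.2]
    · rw [indicator_of_notMem hξ, ← integral_zero ℝ E]
      congr 1 with η
      exact indicator_of_notMem (fun h => hξ ⟨h.1.trans h.2.1, h.2.2⟩) g
  rw [← integral_indicator hmeas, Measure.volume_eq_prod,
    integral_prod _ ((integrable_indicator_iff hmeas).2 hg)]
  simp_rw [hslice]
  rw [integral_indicator measurableSet_Icc, integral_Icc_eq_integral_Ioc,
    ← intervalIntegral.integral_of_le hab]

theorem setIntegral_lightCone [CompleteSpace E] {g : ℝ × ℝ → E} {x t : ℝ} (ht : 0 ≤ t)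
    (hg : ContinuousOn g (lightCone x t)) :
    ∫ q in lightCone x t, g q =
      (2⁻¹ : ℝ) • ∫ ξ in (x - t)..(x + t), ∫ η in (x - t)..ξ, g (charCoords (ξ, η)) := by
  have hcont : ContinuousOn (g ∘ charCoords) (triangle (x - t) (x + t)) :=
    hg.comp charCoords.continuous.continuousOn (image_charCoords_triangle x t ▸ mapsTo_image _ _)
  rw [← image_charCoords_triangle,
    setIntegral_image_charCoords (isCompact_triangle _ _).isClosed.measurableSet,
    setIntegral_triangle (g := fun p => g (charCoords p)) (by linarith)
      (hcont.integrableOn_compact (isCompact_triangle _ _))]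

end CharacteristicCoordinates

section WaveEquation

noncomputable def dAlembertian (f : ℝ × ℝ → ℝ) (p : ℝ × ℝ) : ℝ :=
  fderiv ℝ (fderiv ℝ f) p (0, 1) (0, 1) - fderiv ℝ (fderiv ℝ f) p (1, 0) (1, 0)

variable {T : ℝ} {f g : ℝ × ℝ → ℝ}

theorem uniqueDiffOn_univ_prod_Ico : UniqueDiffOn ℝ ((univ : Set ℝ) ×ˢ Ico 0 T) :=
  uniqueDiffOn_univ.prod (uniqueDiffOn_Ico 0 T)

/-- In characteristic coordinates the wave operator is `-4 ∂_η ∂_ξ`. -/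
theorem hasDerivAt_fderivWithin_charCoords (hf : ContDiffOn ℝ 2 f (univ ×ˢ Ioo 0 T))
    (hwave : ∀ p ∈ univ ×ˢ Ioo 0 T, dAlembertian f p = g p) {ξ η : ℝ}
    (hη : (ξ - η) / 2 ∈ Ioo 0 T) :
    HasDerivAt (fun η => fderivWithin ℝ f (univ ×ˢ Ico 0 T) (charCoords (ξ, η)) (charCoords (1, 0)))
      (-g (charCoords (ξ, η)) / 4) η := by
  have hp : charCoords (ξ, η) ∈ univ ×ˢ Ioo 0 T := charCoords_mem_univ_prod.2 hη
  have hnhds : univ ×ˢ Ioo 0 T ∈ 𝓝 (charCoords (ξ, η)) :=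
    (isOpen_univ.prod isOpen_Ioo).mem_nhds hp
  have hf₂ : ContDiffAt ℝ 2 f (charCoords (ξ, η)) := hf.contDiffAt hnhds
  have hcurve : HasDerivAt (fun η => charCoords (ξ, η)) (charCoords (0, 1)) η :=
    charCoords.hasFDerivAt.comp_hasDerivAt η ((hasDerivAt_const η ξ).prodMk (hasDerivAt_id η))
  have hG := (ContinuousLinearMap.apply ℝ ℝ (charCoords (1, 0))).hasFDerivAt.comp_hasDerivAt η
    ((hf₂.hasFDerivAt_fderivWithin (mem_of_superset hnhds
      (prod_mono subset_rfl Ioo_subset_Ico_self))).comp_hasDerivAt η hcurve)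
  refine hG.congr_deriv ?_
  rw [ContinuousLinearMap.apply_apply, charCoords_zero_one, charCoords_one_zero,
    ContinuousLinearMap.map_smul, ContinuousLinearMap.map_smul, smul_apply,
    hf₂.fderiv_fderiv_sub_add, ← hwave _ hp, dAlembertian, smul_eq_mul, smul_eq_mul]
  ring

theorem integral_charCoords_snd (hf₁ : ContDiffOn ℝ 1 f (univ ×ˢ Ico 0 T))
    (hf₂ : ContDiffOn ℝ 2 f (univ ×ˢ Ioo 0 T)) (hg : ContinuousOn g (univ ×ˢ Ico 0 T))
    (hwave : ∀ p ∈ univ ×ˢ Ioo 0 T, dAlembertian f p = g p)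
    {ξ η₀ : ℝ} (hη₀ : η₀ ≤ ξ) (hξ : ξ - η₀ < 2 * T) :
    ∫ η in η₀..ξ, g (charCoords (ξ, η)) =
      4 * (fderivWithin ℝ f (univ ×ˢ Ico 0 T) (charCoords (ξ, η₀)) (charCoords (1, 0)) -
        fderivWithin ℝ f (univ ×ˢ Ico 0 T) (ξ, 0) (charCoords (1, 0))) := by
  have hmaps : MapsTo (fun η => charCoords (ξ, η)) (Icc η₀ ξ) (univ ×ˢ Ico 0 T) :=
    fun η hη => charCoords_mem_univ_prod.2 ⟨by linarith [hη.2], by linarith [hη.1]⟩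
  have hcurve : ContinuousOn (fun η => charCoords (ξ, η)) (Icc η₀ ξ) := by fun_prop
  have hFTC := intervalIntegral.integral_eq_sub_of_hasDerivAt_of_le hη₀
    (f := fun η => -4 * fderivWithin ℝ f (univ ×ˢ Ico 0 T) (charCoords (ξ, η)) (charCoords (1, 0)))
    (f' := fun η => g (charCoords (ξ, η)))
    (continuousOn_const.mul
      (hf₁.continuousOn_fderivWithin_apply_comp uniqueDiffOn_univ_prod_Ico hcurve hmaps _))
    (fun η hη => by
      simpa [mul_div_cancel₀] using (hasDerivAt_fderivWithin_charCoords hf₂ hwave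
        ⟨by linarith [hη.2], by linarith [hη.1]⟩).const_mul (-4))
    ((hg.comp hcurve hmaps).intervalIntegrable_of_Icc hη₀)
  have hdiag : charCoords (ξ, ξ) = (ξ, 0) := by simp
  rw [hFTC, hdiag]
  ring

theorem integral_fderivWithin_charCoords_fst (hf : ContDiffOn ℝ 1 f (univ ×ˢ Ico 0 T))
    {a b : ℝ} (hab : a ≤ b) (hb : b - a < 2 * T) :
    ∫ ξ in a..b, fderivWithin ℝ f (univ ×ˢ Ico 0 T) (charCoords (ξ, a)) (charCoords (1, 0)) =
      f (charCoords (b, a)) - f (a, 0) := by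
  have hmaps : MapsTo (fun ξ => charCoords (ξ, a)) (Icc a b) (univ ×ˢ Ico 0 T) :=
    fun ξ hξ => charCoords_mem_univ_prod.2 ⟨by linarith [hξ.1], by linarith [hξ.2]⟩
  have hcurve : ContinuousOn (fun ξ => charCoords (ξ, a)) (Icc a b) := by fun_prop
  have hderiv : ∀ ξ ∈ Ioo a b, HasDerivAt (fun ξ => f (charCoords (ξ, a)))
      (fderivWithin ℝ f (univ ×ˢ Ico 0 T) (charCoords (ξ, a)) (charCoords (1, 0))) ξ := by
    intro ξ hξ
    have hnhds : univ ×ˢ Ico 0 T ∈ 𝓝 (charCoords (ξ, a)) :=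
      prod_mem_nhds univ_mem (Ico_mem_nhds (by simp; linarith [hξ.1]) (by simp; linarith [hξ.2]))
    exact ((hf.differentiableOn one_ne_zero _ (mem_of_mem_nhds hnhds)).hasFDerivWithinAt.hasFDerivAt
      hnhds).comp_hasDerivAt ξ (charCoords.hasFDerivAt.comp_hasDerivAt ξ
        ((hasDerivAt_id ξ).prodMk (hasDerivAt_const ξ a)))
  rw [intervalIntegral.integral_eq_sub_of_hasDerivAt_of_le hab (hf.continuousOn.comp hcurve hmaps)
    hderiv ((hf.continuousOn_fderivWithin_apply_comp uniqueDiffOn_univ_prod_Ico hcurve hmaps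
      _).intervalIntegrable_of_Icc hab)]
  simp

theorem hasDerivAt_fderivWithin_fst_zero (hf : ContDiffOn ℝ 1 f (univ ×ˢ Ico 0 T)) (hT : 0 < T)
    (ξ : ℝ) :
    HasDerivAt (fun y => f (y, 0)) (fderivWithin ℝ f (univ ×ˢ Ico 0 T) (ξ, 0) (1, 0)) ξ :=
  (hf.differentiableOn one_ne_zero _ ⟨trivial, left_mem_Ico.2 hT⟩).hasFDerivWithinAt.comp_hasDerivAt
    ξ ((hasDerivAt_id ξ).prodMk (hasDerivAt_const ξ 0))
    (Eventually.of_forall fun _ => ⟨trivial, left_mem_Ico.2 hT⟩)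

theorem derivWithin_snd_zero (hf : ContDiffOn ℝ 1 f (univ ×ˢ Ico 0 T)) (hT : 0 < T) (ξ : ℝ) :
    derivWithin (fun s => f (ξ, s)) (Ici 0) 0 =
      fderivWithin ℝ f (univ ×ˢ Ico 0 T) (ξ, 0) (0, 1) := by
  have h : HasDerivWithinAt (fun s => f (ξ, s))
      (fderivWithin ℝ f (univ ×ˢ Ico 0 T) (ξ, 0) (0, 1)) (Ico 0 T) 0 :=
    (hf.differentiableOn one_ne_zero _ ⟨trivial, left_mem_Ico.2 hT⟩).hasFDerivWithinAt
      |>.comp_hasDerivWithinAt 0 ((hasDerivAt_const 0 ξ).prodMk (hasDerivAt_id 0)).hasDerivWithinAt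
        fun _ hs => ⟨trivial, hs⟩
  exact (h.mono_of_mem_nhdsWithin (Ico_mem_nhdsGE hT)).derivWithin (uniqueDiffWithinAt_Ici 0)

theorem integral_triangle_charCoords_of_wave (hf₁ : ContDiffOn ℝ 1 f (univ ×ˢ Ico 0 T))
    (hf₂ : ContDiffOn ℝ 2 f (univ ×ˢ Ioo 0 T)) (hg : ContinuousOn g (univ ×ˢ Ico 0 T))
    (hwave : ∀ p ∈ univ ×ˢ Ioo 0 T, dAlembertian f p = g p)
    {a b : ℝ} (hab : a ≤ b) (hb : b - a < 2 * T) :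
    ∫ ξ in a..b, ∫ η in a..ξ, g (charCoords (ξ, η)) =
      4 * (f (charCoords (b, a)) - f (a, 0)) - 2 * (f (b, 0) - f (a, 0)) -
        2 * ∫ ξ in a..b, fderivWithin ℝ f (univ ×ˢ Ico 0 T) (ξ, 0) (0, 1) := by
  set G := fderivWithin ℝ f (univ ×ˢ Ico 0 T)
  have hT : 0 < T := by linarith
  have hboundary (v : ℝ × ℝ) : Continuous fun ξ : ℝ => G (ξ, 0) v :=
    continuousOn_univ.1 <| hf₁.continuousOn_fderivWithin_apply_comp uniqueDiffOn_univ_prod_Ico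
      (by fun_prop) (fun _ _ => ⟨trivial, left_mem_Ico.2 hT⟩) v
  have hedge : ContinuousOn (fun ξ => G (charCoords (ξ, a)) (charCoords (1, 0))) (Icc a b) :=
    hf₁.continuousOn_fderivWithin_apply_comp uniqueDiffOn_univ_prod_Ico (by fun_prop)
      (fun ξ hξ => charCoords_mem_univ_prod.2 ⟨by linarith [hξ.1], by linarith [hξ.2]⟩) _
  have hinner : ∀ ξ ∈ uIcc a b, ∫ η in a..ξ, g (charCoords (ξ, η)) =
      4 * G (charCoords (ξ, a)) (charCoords (1, 0)) - 2 * G (ξ, 0) (1, 0) -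
        2 * G (ξ, 0) (0, 1) := by
    intro ξ hξ
    rw [uIcc_of_le hab] at hξ
    rw [integral_charCoords_snd hf₁ hf₂ hg hwave hξ.1 (by linarith [hξ.2])]
    simp only [charCoords_one_zero, ContinuousLinearMap.map_smul, map_add, smul_eq_mul]
    ring
  have hedge_int := (hedge.intervalIntegrable_of_Icc (μ := volume) hab).const_mul 4
  have hboundary_int (v : ℝ × ℝ) : IntervalIntegrable (fun ξ => 2 * G (ξ, 0) v) volume a b :=
    ((hboundary v).intervalIntegrable a b).const_mul 2
  rw [intervalIntegral.integral_congr hinner,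
    intervalIntegral.integral_sub (hedge_int.sub (hboundary_int _)) (hboundary_int _),
    intervalIntegral.integral_sub hedge_int (hboundary_int _),
    intervalIntegral.integral_const_mul, intervalIntegral.integral_const_mul,
    intervalIntegral.integral_const_mul, integral_fderivWithin_charCoords_fst hf₁ hab hb,
    intervalIntegral.integral_eq_sub_of_hasDerivAt
      (fun ξ _ => hasDerivAt_fderivWithin_fst_zero hf₁ hT ξ) ((hboundary _).intervalIntegrable a b)]

end WaveEquation

theorem classical_is_mild_general
    (T : ℝ)
    (φ ψ : ℝ → ℝ)
    (F : ℝ → ℝ) (hF : Continuous F)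
    (u : ℝ → ℝ → ℝ)
    (hu2 : ContDiffOn ℝ 2 (fun q : ℝ × ℝ => u q.1 q.2) (Set.univ ×ˢ Set.Ioo (0 : ℝ) T))
    (hu1 : ContDiffOn ℝ 1 (fun q : ℝ × ℝ => u q.1 q.2) (Set.univ ×ˢ Set.Ico (0 : ℝ) T))
    (hwave : ∀ x t : ℝ, 0 < t → t < T →
      deriv (deriv (u x)) t - deriv (deriv (fun y => u y t)) x = F (u x t))
    (hinit0 : ∀ x : ℝ, u x 0 = φ x)
    (hinit1 : ∀ x : ℝ, derivWithin (u x) (Set.Ici (0 : ℝ)) 0 = ψ x) :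
    ∀ x t : ℝ, 0 ≤ t → t < T →
      u x t = (1 / 2) * (∫ y in (x - t)..(x + t), ψ y)
        + (1 / 2) * (φ (x + t) + φ (x - t))
        + (1 / 2) * (∫ q in lightCone x t, F (u q.1 q.2)) := by
  intro x t ht htT
  set f : ℝ × ℝ → ℝ := fun q => u q.1 q.2
  have hT : 0 < T := ht.trans_lt htT
  have hg : ContinuousOn (fun q => F (f q)) (univ ×ˢ Ico 0 T) :=
    hF.comp_continuousOn hu1.continuousOn
  have hbox : ∀ p ∈ univ ×ˢ Ioo 0 T, dAlembertian f p = F (f p) := by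
    rintro ⟨y, s⟩ hp
    have hf₂ := hu2.contDiffAt ((isOpen_univ.prod isOpen_Ioo).mem_nhds hp)
    rw [dAlembertian, ← hf₂.deriv_deriv_snd, ← hf₂.deriv_deriv_fst]
    exact hwave y s hp.2.1 hp.2.2
  have hψ (ξ : ℝ) : fderivWithin ℝ f (univ ×ˢ Ico 0 T) (ξ, 0) (0, 1) = ψ ξ := by
    rw [← derivWithin_snd_zero hu1 hT, ← hinit1]
  have hvertex : f (charCoords (x + t, x - t)) = u x t := by
    simp only [f, charCoords_apply]
    ring_nf
  rw [setIntegral_lightCone ht (hg.mono fun q hq => ⟨trivial, hq.1, hq.2.1.trans_lt htT⟩),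
    smul_eq_mul, integral_triangle_charCoords_of_wave hu1 hu2 hg hbox (by linarith) (by linarith)]
  simp only [hvertex, hψ, f, hinit0]
  ring

/-- a classical solution of `□u = F(u)` on `[0,T)` is a mild solution:
it satisfies the d'Alembert fixed point equation. -/
theorem classical_is_mild
    (T : ℝ) (hT : 0 < T)
    (φ ψ : ℝ → ℝ) (hφ : ContDiff ℝ 2 φ) (hψ : ContDiff ℝ 1 ψ)
    (F : ℝ → ℝ) (hF : Continuous F)
    (u : ℝ → ℝ → ℝ)
    (hu2 : ContDiffOn ℝ 2 (fun q : ℝ × ℝ => u q.1 q.2) (Set.univ ×ˢ Set.Ioo (0 : ℝ) T))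
    (hu1 : ContDiffOn ℝ 1 (fun q : ℝ × ℝ => u q.1 q.2) (Set.univ ×ˢ Set.Ico (0 : ℝ) T))
    (hwave : ∀ x t : ℝ, 0 < t → t < T →
      deriv (deriv (u x)) t - deriv (deriv (fun y => u y t)) x = F (u x t))
    (hinit0 : ∀ x : ℝ, u x 0 = φ x)
    (hinit1 : ∀ x : ℝ, derivWithin (u x) (Set.Ici (0 : ℝ)) 0 = ψ x) :
    ∀ x t : ℝ, 0 ≤ t → t < T →
      u x t = (1 / 2) * (∫ y in (x - t)..(x + t), ψ y)
        + (1 / 2) * (φ (x + t) + φ (x - t))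
        + (1 / 2) * (∫ q in lightCone x t, F (u q.1 q.2)) :=
  classical_is_mild_general T φ ψ F hF u hu2 hu1 hwave hinit0 hinit1
end

section
/- Let F(z) = Σ_{k≥0} a_k z^k with Σ_{k≥0}|a_k| < ∞ on |z| ≤ 1, and let (p_k)_{k≥0} be a probability distribution on the nonnegative integers such that p_k > 0 whenever a_k ≠ 0, p_0 > 0, and Σ_{k≥1} k p_k ≤ 1. Set b_k = a_k/p_k if p_k ≠ 0 and b_k = 0 otherwise, and w(x,t) = v(x,t)/p_0. Let T > 0 and let u be a mild solution of □u = F(u) on [0,T) with |u| ≤ 1. Fix (x,t) ∈ ℝ × (0,T), let (ξ,τ) be a random point uniformly distributed in Δ(x,t) and let κ be an independent random variable with distribution (p_k). Then u(x,t) = 𝔼[ (w(x,t) + (t²/2) b_0) · 1_{κ=0} + (t²/2) b_κ u(ξ,τ)^κ · 1_{κ≥1} ]; equivalently, u(x,t) = p_0 (w(x,t) + (t²/2) b_0) + Σ_{k≥1} p_k (t²/2) b_k ∫ u(y,s)^k dμ_{x,t}(y,s), where μ_{x,t} is the uniform probability measure on Δ(x,t). -/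
/-!
Where `|u| ≤ 1` the series `F(u) = ∑ aₖ uᵏ` is dominated by `∑ |aₖ|`, so it can be integrated term
by term against any finite measure. The cone `Δ(x,t)` has area `t²`, so `∫_Δ = t² ∫ · dμ_{x,t}` and
the mild-solution identity becomes `u = v + (t²/2) ∑ aₖ ∫ uᵏ dμ_{x,t}`, whose `k = 0` term is
`a₀ t²/2` because `μ_{x,t}` is a probability measure. Finally `aₖ = pₖ bₖ` for every `k`, since
`pₖ > 0` whenever `aₖ ≠ 0`.
-/

open MeasureTheory Set

/-- The uniform probability measure on `Δ(x,t)`. -/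
noncomputable def uniformCone (x t : ℝ) : MeasureTheory.Measure (ℝ × ℝ) :=
  (ENNReal.ofReal (t ^ 2))⁻¹ • (MeasureTheory.volume.restrict (lightCone x t))

section PowerSeries

variable {α : Type*} [MeasurableSpace α] {μ : Measure α} {g : α → ℝ}

theorem norm_mul_pow_le_abs (hg : ∀ᵐ q ∂μ, |g q| ≤ 1) (c : ℝ) (k : ℕ) :
    ∀ᵐ q ∂μ, ‖c * g q ^ k‖ ≤ |c| :=
  hg.mono fun q hq => by
    rw [norm_mul, norm_pow, Real.norm_eq_abs, Real.norm_eq_abs]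
    exact mul_le_of_le_one_right (abs_nonneg c) (pow_le_one₀ (abs_nonneg _) hq)

theorem hasSum_integral_mul_pow [IsFiniteMeasure μ] {a : ℕ → ℝ} (ha : Summable fun k => |a k|)
    (hgm : AEStronglyMeasurable g μ) (hg : ∀ᵐ q ∂μ, |g q| ≤ 1) :
    HasSum (fun k => a k * ∫ q, g q ^ k ∂μ) (∫ q, ∑' k, a k * g q ^ k ∂μ) := by
  have hbound := fun k => norm_mul_pow_le_abs hg (a k) k
  have hint : ∀ k, Integrable (fun q => a k * g q ^ k) μ := fun k =>
    .of_bound ((hgm.pow k).const_mul _) _ (hbound k)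
  have hsum : Summable fun k => ∫ q, ‖a k * g q ^ k‖ ∂μ := by
    refine (ha.mul_right (μ.real univ)).of_nonneg_of_le
      (fun k => integral_nonneg fun _ => norm_nonneg _) fun k => ?_
    calc ∫ q, ‖a k * g q ^ k‖ ∂μ ≤ ∫ _, |a k| ∂μ :=
          integral_mono_ae (hint k).norm (integrable_const _) (hbound k)
      _ = |a k| * μ.real univ := by rw [integral_const, smul_eq_mul, mul_comm]
  simpa only [integral_const_mul] using hasSum_integral_of_summable_integral_norm hint hsum

end PowerSeries

theorem integral_zero_abs {t : ℝ} (ht : 0 ≤ t) : ∫ z in (0 : ℝ)..t, |z| = t ^ 2 / 2 := by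
  rw [intervalIntegral.integral_congr fun z hz => abs_of_nonneg (uIcc_of_le ht ▸ hz).1,
    integral_id]
  ring

theorem integral_symm_sub_abs {t : ℝ} (ht : 0 ≤ t) : ∫ z in -t..t, (t - |z|) = t ^ 2 := by
  have hneg : ∫ z in -t..0, |z| = t ^ 2 / 2 := by
    have h := intervalIntegral.integral_comp_neg (a := 0) (b := t) (fun z => |z|)
    simp only [abs_neg, neg_zero] at h
    rw [← h, integral_zero_abs ht]
  rw [intervalIntegral.integral_sub intervalIntegrable_const
    (continuous_abs.intervalIntegrable _ _), intervalIntegral.integral_const,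
    ← intervalIntegral.integral_add_adjacent_intervals (b := 0)
      (continuous_abs.intervalIntegrable _ _) (continuous_abs.intervalIntegrable _ _),
    hneg, integral_zero_abs ht, smul_eq_mul]
  ring

theorem lintegral_ofReal_sub_abs {t : ℝ} (ht : 0 ≤ t) :
    ∫⁻ z : ℝ, ENNReal.ofReal (t - |z|) = ENNReal.ofReal (t ^ 2) := by
  have hsupp : Function.support (fun z : ℝ => ENNReal.ofReal (t - |z|)) ⊆ Icc (-t) t := by
    intro z hz
    rw [Function.mem_support, ne_eq, ENNReal.ofReal_eq_zero, not_le, sub_pos] at hz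
    exact abs_le.1 hz.le
  have hnonneg : 0 ≤ᵐ[volume.restrict (Icc (-t) t)] fun z : ℝ => t - |z| :=
    (ae_restrict_iff' measurableSet_Icc).2 <| .of_forall fun z hz => sub_nonneg.2 (abs_le.2 hz)
  rw [← setLIntegral_eq_of_support_subset hsupp, ← ofReal_integral_eq_lintegral_ofReal
    (f := fun z => t - |z|) (continuous_const.sub continuous_abs).integrableOn_Icc hnonneg,
    integral_Icc_eq_integral_Ioc, ← intervalIntegral.integral_of_le (by linarith),
    integral_symm_sub_abs ht]

theorem isClosed_lightCone (x t : ℝ) : IsClosed (lightCone x t) :=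
  (isClosed_le continuous_const continuous_snd).inter <|
    (isClosed_le continuous_snd continuous_const).inter <|
      isClosed_le (continuous_fst.sub continuous_const).abs (continuous_const.sub continuous_snd)

theorem measurableSet_lightCone (x t : ℝ) : MeasurableSet (lightCone x t) :=
  (isClosed_lightCone x t).measurableSet

theorem preimage_mk_lightCone (x t y : ℝ) :
    Prod.mk y ⁻¹' lightCone x t = Icc 0 (t - |y - x|) := by
  ext s
  simp only [lightCone, mem_preimage, mem_ofPred_eq, mem_Icc]
  constructor
  · rintro ⟨h0, -, hy⟩
    exact ⟨h0, by linarith⟩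
  · rintro ⟨h0, hy⟩
    exact ⟨h0, by linarith [abs_nonneg (y - x)], by linarith⟩

theorem volume_lightCone (x : ℝ) {t : ℝ} (ht : 0 ≤ t) :
    volume (lightCone x t) = ENNReal.ofReal (t ^ 2) := by
  rw [Measure.volume_eq_prod, Measure.prod_apply (measurableSet_lightCone x t)]
  simp_rw [preimage_mk_lightCone, Real.volume_Icc, sub_zero]
  rw [lintegral_sub_right_eq_self (fun z => ENNReal.ofReal (t - |z|)) x,
    lintegral_ofReal_sub_abs ht]

open scoped ProbabilityTheory in
theorem uniformCone_eq_cond (x : ℝ) {t : ℝ} (ht : 0 ≤ t) :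
    uniformCone x t = volume[|lightCone x t] := by
  rw [uniformCone, ProbabilityTheory.cond, volume_lightCone x ht]

theorem isProbabilityMeasure_uniformCone (x : ℝ) {t : ℝ} (ht : 0 < t) :
    IsProbabilityMeasure (uniformCone x t) := by
  rw [uniformCone_eq_cond x ht.le]
  refine ProbabilityTheory.cond_isProbabilityMeasure_of_finite ?_ ?_ <;>
    rw [volume_lightCone x ht.le]
  · simpa using ht.ne'
  · exact ENNReal.ofReal_ne_top

theorem ae_uniformCone_mem (x t : ℝ) : ∀ᵐ q ∂uniformCone x t, q ∈ lightCone x t :=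
  Measure.ae_smul_measure (ae_restrict_mem (measurableSet_lightCone x t)) _

theorem setIntegral_lightCone_s7 (x : ℝ) {t : ℝ} (ht : 0 < t) (f : ℝ × ℝ → ℝ) :
    ∫ q in lightCone x t, f q = t ^ 2 * ∫ q, f q ∂uniformCone x t := by
  rw [uniformCone, integral_smul_measure, ENNReal.toReal_inv,
    ENNReal.toReal_ofReal (by positivity), smul_eq_mul, mul_inv_cancel_left₀ (by positivity)]

theorem mul_ite_div_eq {K : Type*} [Field K] [DecidableEq K] {p a : K} (h : p = 0 → a = 0) :
    p * (if p ≠ 0 then a / p else 0) = a := by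
  split_ifs with hp
  · exact mul_div_cancel₀ a hp
  · rw [not_not.1 hp, h (not_not.1 hp), zero_mul]

theorem one_step_cascade_identity_general
    (a : ℕ → ℝ) (ha : Summable fun k => |a k|)
    (F : ℝ → ℝ) (hFdef : ∀ z : ℝ, |z| ≤ 1 → F z = ∑' k : ℕ, a k * z ^ k)
    (p : ℕ → ℝ)
    (hp0 : 0 < p 0) (hppos : ∀ k, a k ≠ 0 → 0 < p k)
    (b : ℕ → ℝ) (hb : ∀ k, b k = if p k ≠ 0 then a k / p k else 0)
    (v w : ℝ → ℝ → ℝ)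
    (hw : ∀ x t : ℝ, w x t = v x t / p 0)
    (T : ℝ)
    (u : ℝ → ℝ → ℝ) (hmeas : Measurable (fun q : ℝ × ℝ => u q.1 q.2))
    (hub : ∀ x t : ℝ, 0 ≤ t → t < T → |u x t| ≤ 1)
    (hmild : ∀ x t : ℝ, 0 ≤ t → t < T →
      u x t = v x t + (1 / 2) * (∫ q in lightCone x t, F (u q.1 q.2)))
    (x t : ℝ) (ht : 0 < t) (htT : t < T) :
    u x t = p 0 * (w x t + t ^ 2 / 2 * b 0) +
      ∑' k : ℕ, p (k + 1) * (t ^ 2 / 2) * b (k + 1) *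
        ∫ q, (u q.1 q.2) ^ (k + 1) ∂(uniformCone x t) := by
  have := isProbabilityMeasure_uniformCone x ht
  have hu : ∀ᵐ q ∂uniformCone x t, |u q.1 q.2| ≤ 1 :=
    (ae_uniformCone_mem x t).mono fun q hq => hub q.1 q.2 hq.1 (hq.2.1.trans_lt htT)
  have hseries : HasSum (fun k => a k * ∫ q, u q.1 q.2 ^ k ∂uniformCone x t)
      (∫ q, F (u q.1 q.2) ∂uniformCone x t) := by
    rw [integral_congr_ae (hu.mono fun q hq => hFdef _ hq)]
    exact hasSum_integral_mul_pow ha hmeas.aestronglyMeasurable hu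
  have hpb : ∀ k, p k * b k = a k := fun k =>
    hb k ▸ mul_ite_div_eq fun hpk => by_contra fun hak => (hppos k hak).ne' hpk
  have hterm : ∀ k : ℕ, p (k + 1) * (t ^ 2 / 2) * b (k + 1) *
      ∫ q, u q.1 q.2 ^ (k + 1) ∂uniformCone x t =
      t ^ 2 / 2 * (a (k + 1) * ∫ q, u q.1 q.2 ^ (k + 1) ∂uniformCone x t) := fun k => by
    rw [← hpb]; ring
  rw [hmild x t ht.le htT, setIntegral_lightCone_s7 x ht, ← hseries.tsum_eq,
    hseries.summable.tsum_eq_zero_add, tsum_congr hterm, tsum_mul_left, hw, ← hpb 0]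
  simp only [pow_zero, integral_const, probReal_univ, one_smul, mul_one]
  field_simp [hp0.ne']
  ring

/-- Lemma 1 of the paper, the one-step cascade identity:
`u(x,t) = 𝔼[(w(x,t) + (t²/2)b₀)1_{κ=0} + (t²/2) b_κ u(ξ,τ)^κ 1_{κ≥1}]`, i.e.
`u(x,t) = p₀(w(x,t) + (t²/2)b₀) + Σ_{k≥1} p_k (t²/2) b_k ∫ u^k dμ_{x,t}`. -/
theorem one_step_cascade_identity
    (a : ℕ → ℝ) (ha : Summable fun k => |a k|)
    (F : ℝ → ℝ) (hFdef : ∀ z : ℝ, |z| ≤ 1 → F z = ∑' k : ℕ, a k * z ^ k)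
    (p : ℕ → ℝ) (hpnn : ∀ k, 0 ≤ p k) (hpsum : HasSum p 1)
    (hp0 : 0 < p 0) (hppos : ∀ k, a k ≠ 0 → 0 < p k)
    (hmean : Summable fun k : ℕ => (k : ℝ) * p k)
    (hmean1 : (∑' k : ℕ, (k : ℝ) * p k) ≤ 1)
    (b : ℕ → ℝ) (hb : ∀ k, b k = if p k ≠ 0 then a k / p k else 0)
    (φ ψ : ℝ → ℝ) (v w : ℝ → ℝ → ℝ)
    (hv : ∀ x t : ℝ, v x t =
      (1 / 2) * (∫ y in (x - t)..(x + t), ψ y) + (1 / 2) * (φ (x + t) + φ (x - t)))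
    (hw : ∀ x t : ℝ, w x t = v x t / p 0)
    (T : ℝ) (hT : 0 < T)
    (u : ℝ → ℝ → ℝ) (hmeas : Measurable (fun q : ℝ × ℝ => u q.1 q.2))
    (hub : ∀ x t : ℝ, 0 ≤ t → t < T → |u x t| ≤ 1)
    (hmild : ∀ x t : ℝ, 0 ≤ t → t < T →
      u x t = v x t + (1 / 2) * (∫ q in lightCone x t, F (u q.1 q.2)))
    (x t : ℝ) (ht : 0 < t) (htT : t < T) :
    u x t = p 0 * (w x t + t ^ 2 / 2 * b 0) +
      ∑' k : ℕ, p (k + 1) * (t ^ 2 / 2) * b (k + 1) *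
        ∫ q, (u q.1 q.2) ^ (k + 1) ∂(uniformCone x t) :=
  one_step_cascade_identity_general a ha F hFdef p hp0 hppos b hb v w hw T u hmeas hub hmild x t ht
    htT
end
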